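/- arXiv:1911.03423 — 4 statements merged into one kernel-verified Lean document; each statement's English description precedes it below -/
import Mathlib

section
/- In the braid group on n+1 strands, if i_0 + 1 > m + k, then for every g in the standard parabolic subgroup A_I generated by σ_m, …, σ_{m+k−1}, the conjugate a_{i_0}^{-1} g a_{i_0} lies in the subgroup A_{I'} generated by σ_{m+1}, …, σ_{m+k}, and in fact a_{i_0}^{-1} σ_j a_{i_0} = σ_{j+1} for each j ∈ I. -/
/-- Braid relations on generators σ_1,…,σ_n (0-indexed by `Fin n`). -/
def braidRels (n : ℕ) : Set (FreeGroup (Fin n)) :=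
  { r | (∃ i j : Fin n, (i : ℕ) + 2 ≤ (j : ℕ) ∧
          r = FreeGroup.of i * FreeGroup.of j * (FreeGroup.of i)⁻¹ * (FreeGroup.of j)⁻¹) ∨
        (∃ i j : Fin n, (i : ℕ) + 1 = (j : ℕ) ∧
          r = FreeGroup.of i * FreeGroup.of j * FreeGroup.of i *
              (FreeGroup.of j)⁻¹ * (FreeGroup.of i)⁻¹ * (FreeGroup.of j)⁻¹) }

/-- The braid group on `n+1` strands. -/
abbrev BraidGroup (n : ℕ) := PresentedGroup (braidRels n)

/-- The Artin generator σ_j (1-indexed, `1 ≤ j ≤ n`); junk value `1` outside that range. -/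
noncomputable def σb {n : ℕ} (j : ℕ) : BraidGroup n :=
  if h : 1 ≤ j ∧ j ≤ n then PresentedGroup.of (⟨j - 1, by omega⟩ : Fin n) else 1

/-- a_i = σ_i σ_{i-1} ⋯ σ_1, with a_0 = 1. -/
noncomputable def abr {n : ℕ} : ℕ → BraidGroup n
  | 0 => 1
  | i + 1 => σb (i + 1) * abr i

/-- transposition (i+1, i+2) (1-based) in S_{n+1} -/
def swapGen {n : ℕ} (i : Fin n) : Equiv.Perm (Fin (n + 1)) :=
  Equiv.swap i.castSucc i.succ

lemma swap_disjoint_commute {N : ℕ} {a b c d : Fin N} (h1 : a ≠ c) (h2 : a ≠ d) (h3 : b ≠ c)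
    (h4 : b ≠ d) : Commute (Equiv.swap a b) (Equiv.swap c d) := by
  apply Equiv.Perm.Disjoint.commute
  intro x
  by_cases hxa : x = a
  · subst hxa; right; exact Equiv.swap_apply_of_ne_of_ne h1 h2
  by_cases hxb : x = b
  · subst hxb; right; exact Equiv.swap_apply_of_ne_of_ne h3 h4
  · left; exact Equiv.swap_apply_of_ne_of_ne hxa hxb

lemma swap_braid {N : ℕ} (a b c : Fin N) (hab : a ≠ b) (hbc : b ≠ c) (hac : a ≠ c) :
    Equiv.swap a b * Equiv.swap b c * Equiv.swap a b =
      Equiv.swap b c * Equiv.swap a b * Equiv.swap b c := by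
  have h1 : Equiv.swap a b * Equiv.swap b c * Equiv.swap a b = Equiv.swap a c := by
    rw [Equiv.swap_comm a b, Equiv.swap_comm b c]
    exact Equiv.swap_mul_swap_mul_swap hbc.symm hac.symm
  have h2 : Equiv.swap b c * Equiv.swap a b * Equiv.swap b c = Equiv.swap c a := by
    exact Equiv.swap_mul_swap_mul_swap hab hac
  rw [h1, h2, Equiv.swap_comm]

lemma braid_rels_perm (n : ℕ) : ∀ r ∈ braidRels n, FreeGroup.lift (swapGen (n := n)) r = 1 := by
  rintro r (⟨i, j, hij, rfl⟩ | ⟨i, j, hij, rfl⟩) <;>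
    simp only [map_mul, map_inv, FreeGroup.lift_apply_of]
  · have hc : Commute (swapGen (n := n) i) (swapGen j) := by
      apply swap_disjoint_commute <;>
        exact Fin.ne_of_val_ne (by simp only [Fin.val_succ, Fin.coe_castSucc]; omega)
    rw [hc.eq]; group
  · have : j.castSucc = i.succ := by
      apply Fin.val_injective; simp only [Fin.val_succ, Fin.coe_castSucc]; omega
    have hb := swap_braid (N := n+1) i.castSucc i.succ j.succ
      (Fin.ne_of_val_ne (by simp only [Fin.val_succ, Fin.coe_castSucc]; omega)) (Fin.ne_of_val_ne (by simp only [Fin.val_succ, Fin.coe_castSucc]; omega))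
      (Fin.ne_of_val_ne (by simp only [Fin.val_succ, Fin.coe_castSucc]; omega))
    unfold swapGen
    rw [this, hb]; group

/-- The canonical projection from the braid group onto the symmetric group S_{n+1}. -/
noncomputable def πb {n : ℕ} : BraidGroup n →* Equiv.Perm (Fin (n + 1)) :=
  PresentedGroup.toGroup (braid_rels_perm n)

/-- The standard parabolic subgroup generated by σ_m, …, σ_{m+k-1}. -/
noncomputable def AIb (n m k : ℕ) : Subgroup (BraidGroup n) :=
  Subgroup.closure { x | ∃ j, m ≤ j ∧ j ≤ m + k - 1 ∧ x = σb j }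

namespace BraidGroup

variable {n : ℕ}

theorem of_commute {i j : Fin n} (h : (i : ℕ) + 2 ≤ j) :
    Commute (PresentedGroup.of i : BraidGroup n) (PresentedGroup.of j) :=
  PresentedGroup.mk_eq_mk_of_mul_inv_mem (Or.inl ⟨i, j, h, by group⟩)

theorem of_braid {i j : Fin n} (h : (i : ℕ) + 1 = j) :
    (PresentedGroup.of i * PresentedGroup.of j * PresentedGroup.of i : BraidGroup n) =
      PresentedGroup.of j * PresentedGroup.of i * PresentedGroup.of j :=
  PresentedGroup.mk_eq_mk_of_mul_inv_mem (Or.inr ⟨i, j, h, by group⟩)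

theorem σb_of {i : ℕ} (h₁ : 1 ≤ i) (h₂ : i ≤ n) :
    σb (n := n) i = PresentedGroup.of ⟨i - 1, by omega⟩ :=
  dif_pos ⟨h₁, h₂⟩

theorem σb_commute {i j : ℕ} (h : i + 2 ≤ j) : Commute (σb (n := n) i) (σb j) := by
  unfold σb
  split_ifs
  · exact of_commute (by simp only; omega)
  all_goals simp only [Commute.one_left, Commute.one_right]

theorem σb_braid {i : ℕ} (h₁ : 1 ≤ i) (h₂ : i + 1 ≤ n) :
    σb (n := n) i * σb (i + 1) * σb i = σb (i + 1) * σb i * σb (i + 1) := by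
  rw [σb_of h₁ (by omega), σb_of (by omega) h₂]
  exact of_braid (by simp only; omega)

theorem abr_succ (i : ℕ) : abr (n := n) (i + 1) = σb (i + 1) * abr i := rfl

theorem σb_commute_abr {p q : ℕ} (h : p + 2 ≤ q) : Commute (σb (n := n) q) (abr p) := by
  induction p with
  | zero => exact Commute.one_right _
  | succ p ih => exact ((σb_commute h).symm).mul_right (ih (by omega))

/-- `σ_j` commutes past `σ_i, …, σ_{j+2}`, and the braid relation
`σ_j σ_{j+1} σ_j = σ_{j+1} σ_j σ_{j+1}` then carries it past `σ_{j+1} σ_j` as `σ_{j+1}`. -/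
theorem σb_mul_abr {i j : ℕ} (hj : 1 ≤ j) (hji : j < i) (hi : i ≤ n) :
    σb (n := n) j * abr i = abr i * σb (j + 1) := by
  induction i with
  | zero => omega
  | succ i ih =>
    rcases Nat.lt_or_ge j i with hlt | hge
    · rw [abr_succ, ← mul_assoc, (σb_commute (by omega)).eq, mul_assoc, ih hlt (by omega),
        ← mul_assoc]
    · obtain rfl : j = i := by omega
      obtain ⟨p, rfl⟩ : ∃ p, j = p + 1 := ⟨j - 1, by omega⟩
      calc σb (p + 1) * (σb (p + 1 + 1) * (σb (p + 1) * abr p))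
          = σb (p + 1) * σb (p + 2) * σb (p + 1) * abr p := by simp only [mul_assoc]
        _ = σb (p + 2) * σb (p + 1) * (σb (p + 2) * abr p) := by
          rw [σb_braid hj hi]; simp only [mul_assoc]
        _ = σb (p + 2) * σb (p + 1) * abr p * σb (p + 2) := by
          rw [(σb_commute_abr le_rfl).eq]; simp only [mul_assoc]
        _ = abr (p + 1 + 1) * σb (p + 1 + 1) := by simp only [abr_succ, mul_assoc]

theorem abr_inv_mul_σb_mul_abr {i j : ℕ} (hj : 1 ≤ j) (hji : j < i) (hi : i ≤ n) :
    (abr (n := n) i)⁻¹ * σb j * abr i = σb (j + 1) := by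
  rw [mul_assoc, σb_mul_abr hj hji hi, inv_mul_cancel_left]

theorem AIb_le_comap_conj {m k : ℕ} (hm : 1 ≤ m) (a : BraidGroup n)
    (h : ∀ j, m ≤ j → j ≤ m + k - 1 → a⁻¹ * σb j * a = σb (j + 1)) :
    AIb n m k ≤ (AIb n (m + 1) k).comap (MulAut.conj a⁻¹).toMonoidHom := by
  refine Subgroup.closure_le _ |>.mpr ?_
  rintro _ ⟨j, hmj, hjk, rfl⟩
  simp only [SetLike.mem_coe, Subgroup.mem_comap, MulEquiv.coe_toMonoidHom, MulAut.conj_apply,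
    inv_inv, h j hmj hjk]
  exact Subgroup.subset_closure ⟨j + 1, by omega, by omega, rfl⟩

end BraidGroup

theorem abr_conj_right_general (n m k i0 : ℕ) (hm : 1 ≤ m)
    (hlo : m + k ≤ i0) (hhi : i0 ≤ n) :
    (∀ j, m ≤ j → j ≤ m + k - 1 → (abr (n := n) i0)⁻¹ * σb j * abr i0 = σb (j + 1)) ∧
    ∀ g ∈ AIb n m k, (abr (n := n) i0)⁻¹ * g * abr i0 ∈ AIb n (m + 1) k := by
  have generators : ∀ j, m ≤ j → j ≤ m + k - 1 →
      (abr (n := n) i0)⁻¹ * σb j * abr i0 = σb (j + 1) := fun j hmj hjk =>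
    BraidGroup.abr_inv_mul_σb_mul_abr (by omega) (by omega) hhi
  refine ⟨generators, fun g hg => ?_⟩
  simpa only [Subgroup.mem_comap, MulEquiv.coe_toMonoidHom, MulAut.conj_apply, inv_inv] using
    BraidGroup.AIb_le_comap_conj hm _ generators hg

theorem abr_conj_right (n m k i0 : ℕ) (hm : 1 ≤ m) (hk : 1 ≤ k) (hmk : m + k ≤ n)
    (hlo : m + k ≤ i0) (hhi : i0 ≤ n) :
    (∀ j, m ≤ j → j ≤ m + k - 1 → (abr (n := n) i0)⁻¹ * σb j * abr i0 = σb (j + 1)) ∧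
    ∀ g ∈ AIb n m k, (abr (n := n) i0)⁻¹ * g * abr i0 ∈ AIb n (m + 1) k :=
  abr_conj_right_general n m k i0 hm hlo hhi
end

section
/- Let I = {m, …, m+k−1} ⊆ {1,…,n}, let g be an element of the standard parabolic subgroup A_I of the braid group B_{n+1}, and suppose z = a_{i_0}^{-1} g a_{j_0} is 1-pure (π_z(1)=1), where 0 ≤ i_0, j_0 ≤ n. If i_0 + 1 < m, then i_0 = j_0 and z = g. -/
/-!
Under `π` every generator `σ_j` of `A_I` (so `j ≥ m`) fixes the points `1, …, m-1`, while `a_i`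
sends `1` to `i+1`. Hence 1-purity of `z` says `π_g(j₀+1) = i₀+1`; as `i₀+1 < m`, the point
`i₀+1` is itself fixed by `π_g`, so `i₀ = j₀`. Moreover `a_{i₀}` is a word in `σ_1, …, σ_{i₀}`,
which are at distance at least 2 from the generators of `A_I`, so `a_{i₀}` commutes with `g`
and `z = a_{i₀}⁻¹ g a_{i₀} = g`.
-/

lemma σb_commute {n l j : ℕ} (hlj : l + 2 ≤ j) : Commute (σb l : BraidGroup n) (σb j) := by
  unfold σb
  split_ifs with hl hj
  · refine PresentedGroup.mk_eq_mk_of_mul_inv_mem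
      (Or.inl ⟨⟨l - 1, by omega⟩, ⟨j - 1, by omega⟩, by simp only; omega, ?_⟩)
    simp only [mul_inv_rev, mul_assoc]
  all_goals simp

lemma commute_abr_σb {n i j : ℕ} (hij : i + 2 ≤ j) : Commute (abr i : BraidGroup n) (σb j) := by
  induction i with
  | zero => exact Commute.one_left _
  | succ i ih => exact (σb_commute hij).mul_left (ih (by omega))

lemma AIb_le_centralizer_abr {n m k i : ℕ} (hi : i + 1 < m) :
    AIb n m k ≤ Subgroup.centralizer {abr i} := by
  refine Subgroup.closure_le _ |>.mpr ?_
  rintro _ ⟨j, hmj, -, rfl⟩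
  exact Subgroup.mem_centralizer_singleton_iff.mpr (commute_abr_σb (by omega)).eq.symm

lemma πb_σb {n j : ℕ} (hj1 : 1 ≤ j) (hjn : j ≤ n) :
    πb (σb j : BraidGroup n) = Equiv.swap ⟨j - 1, by omega⟩ ⟨j, by omega⟩ := by
  rw [σb, dif_pos ⟨hj1, hjn⟩, πb, PresentedGroup.toGroup.of, swapGen]
  congr 2
  ext; simp only [Fin.val_succ]; omega

lemma πb_σb_apply_of_lt {n j : ℕ} {x : Fin (n + 1)} (hx : (x : ℕ) + 1 < j) :
    πb (σb j : BraidGroup n) x = x := by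
  by_cases hjn : j ≤ n
  · rw [πb_σb (by omega) hjn]
    exact Equiv.swap_apply_of_ne_of_ne (Fin.ne_of_val_ne (by simp only; omega))
      (Fin.ne_of_val_ne (by simp only; omega))
  · simp [σb, hjn]

lemma AIb_le_stabilizer {n m k : ℕ} {x : Fin (n + 1)} (hx : (x : ℕ) + 1 < m) :
    AIb n m k ≤ (MulAction.stabilizer (Equiv.Perm (Fin (n + 1))) x).comap πb := by
  refine Subgroup.closure_le _ |>.mpr ?_
  rintro _ ⟨j, hmj, -, rfl⟩
  exact πb_σb_apply_of_lt (by omega)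

lemma πb_abr_apply_zero {n i : ℕ} (hi : i ≤ n) :
    πb (abr i : BraidGroup n) 0 = ⟨i, by omega⟩ := by
  induction i with
  | zero => simp [abr]
  | succ i ih =>
    rw [abr, map_mul, Equiv.Perm.mul_apply, ih (by omega), πb_σb (by omega) hi]
    exact Equiv.swap_apply_left _ _

theorem lemma_technical_1 (n m k i0 j0 : ℕ)
    (hi0 : i0 ≤ n) (hj0 : j0 ≤ n) (g : BraidGroup n) (hg : g ∈ AIb n m k)
    (z : BraidGroup n) (hz : z = (abr i0)⁻¹ * g * abr j0)
    (hpure : πb z (⟨0, by omega⟩ : Fin (n + 1)) = ⟨0, by omega⟩)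
    (hlt : i0 + 1 < m) :
    i0 = j0 ∧ z = g := by
  have hg_fix : πb g ⟨i0, by omega⟩ = ⟨i0, by omega⟩ :=
    AIb_le_stabilizer (x := ⟨i0, by omega⟩) hlt hg
  have hg_j0 : πb g ⟨j0, by omega⟩ = ⟨i0, by omega⟩ := by
    rw [hz, map_mul, map_mul, map_inv, Equiv.Perm.mul_apply, Equiv.Perm.mul_apply,
      Equiv.Perm.inv_eq_iff_eq, Fin.zero_eta, πb_abr_apply_zero hi0, πb_abr_apply_zero hj0] at hpure
    exact hpure
  have hij : i0 = j0 := by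
    simpa using (πb g).injective (hg_fix.trans hg_j0.symm)
  subst hij
  refine ⟨rfl, ?_⟩
  rw [hz, mul_assoc, Subgroup.mem_centralizer_singleton_iff.mp (AIb_le_centralizer_abr hlt hg),
    inv_mul_cancel_left]
end

section
/- Let I = {m, …, m+k−1} ⊆ {1,…,n} with m+k ≤ n, let g ∈ A_I, and suppose z = a_{i_0}^{-1} g a_{j_0} is 1-pure, where 0 ≤ i_0, j_0 ≤ n. If i_0 + 1 > m + k, then i_0 = j_0 and z lies in the standard parabolic subgroup A_{I'} generated by σ_{m+1}, …, σ_{m+k}; moreover z = sh(g), where sh is the shift homomorphism sending σ_j to σ_{j+1}. -/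
section Aux

open PresentedGroup

lemma braid_rel_one {n : ℕ} {r : FreeGroup (Fin n)} (hr : r ∈ braidRels n) :
    PresentedGroup.mk (braidRels n) r = 1 :=
  (QuotientGroup.eq_one_iff r).mpr (Subgroup.subset_normalClosure hr)

lemma sigma_eq {n j : ℕ} (h1 : 1 ≤ j) (h2 : j ≤ n) :
    σb (n := n) j = PresentedGroup.of (⟨j - 1, by omega⟩ : Fin n) := dif_pos ⟨h1, h2⟩

lemma sigma_comm {n i j : ℕ} (h1 : 1 ≤ i) (h2 : i + 2 ≤ j) (h3 : j ≤ n) :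
    Commute (σb (n := n) i) (σb (n := n) j) := by
  have hi : i ≤ n := by omega
  have hj : 1 ≤ j := by omega
  set fi : Fin n := ⟨i - 1, by omega⟩ with hfi
  set fj : Fin n := ⟨j - 1, by omega⟩ with hfj
  have hr : (FreeGroup.of fi * FreeGroup.of fj * (FreeGroup.of fi)⁻¹ * (FreeGroup.of fj)⁻¹)
      ∈ braidRels n := Or.inl ⟨fi, fj, by simp [hfi, hfj]; omega, rfl⟩
  have h := braid_rel_one hr
  simp only [map_mul, map_inv] at h
  have h' : PresentedGroup.of (rels := braidRels n) fi * PresentedGroup.of fj *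
      (PresentedGroup.of fi)⁻¹ * (PresentedGroup.of fj)⁻¹ = 1 := h
  rw [sigma_eq h1 hi, sigma_eq hj h3]
  show PresentedGroup.of fi * PresentedGroup.of fj = PresentedGroup.of fj * PresentedGroup.of fi
  calc PresentedGroup.of (rels := braidRels n) fi * PresentedGroup.of fj
      = (PresentedGroup.of fi * PresentedGroup.of fj * (PresentedGroup.of fi)⁻¹ *
          (PresentedGroup.of fj)⁻¹) * (PresentedGroup.of fj * PresentedGroup.of fi) := by group
    _ = PresentedGroup.of fj * PresentedGroup.of fi := by rw [h']; group

lemma sigma_braid {n i : ℕ} (h1 : 1 ≤ i) (h2 : i + 1 ≤ n) :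
    σb (n := n) i * σb (i + 1) * σb i = σb (i + 1) * σb i * σb (i + 1) := by
  have hi : i ≤ n := by omega
  set fi : Fin n := ⟨i - 1, by omega⟩ with hfi
  set fj : Fin n := ⟨i + 1 - 1, by omega⟩ with hfj
  have hr : (FreeGroup.of fi * FreeGroup.of fj * FreeGroup.of fi *
      (FreeGroup.of fj)⁻¹ * (FreeGroup.of fi)⁻¹ * (FreeGroup.of fj)⁻¹) ∈ braidRels n :=
    Or.inr ⟨fi, fj, by simp [hfi, hfj]; omega, rfl⟩
  have h := braid_rel_one hr
  simp only [map_mul, map_inv] at h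
  have h' : PresentedGroup.of (rels := braidRels n) fi * PresentedGroup.of fj *
      PresentedGroup.of fi * (PresentedGroup.of fj)⁻¹ * (PresentedGroup.of fi)⁻¹ *
      (PresentedGroup.of fj)⁻¹ = 1 := h
  rw [sigma_eq h1 hi, sigma_eq (by omega : 1 ≤ i + 1) h2]
  show PresentedGroup.of fi * PresentedGroup.of fj * PresentedGroup.of fi =
    PresentedGroup.of fj * PresentedGroup.of fi * PresentedGroup.of fj
  calc PresentedGroup.of (rels := braidRels n) fi * PresentedGroup.of fj * PresentedGroup.of fi
      = (PresentedGroup.of fi * PresentedGroup.of fj * PresentedGroup.of fi *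
          (PresentedGroup.of fj)⁻¹ * (PresentedGroup.of fi)⁻¹ * (PresentedGroup.of fj)⁻¹) *
        (PresentedGroup.of fj * PresentedGroup.of fi * PresentedGroup.of fj) := by group
    _ = _ := by rw [h']; group

lemma sigma_comm_abr {n s t : ℕ} (h : s + 2 ≤ t) (ht : t ≤ n) :
    Commute (σb (n := n) t) (abr s) := by
  induction s with
  | zero => exact Commute.one_right _
  | succ s ih =>
      show Commute _ (σb (s + 1) * abr s)
      exact Commute.mul_right ((sigma_comm (by omega) (by omega) ht).symm) (ih (by omega))

lemma conj_abr {n : ℕ} {j : ℕ} (hj : 1 ≤ j) :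
    ∀ i, j + 1 ≤ i → i ≤ n → (abr i)⁻¹ * σb j * abr i = σb (n := n) (j + 1) := by
  intro i
  induction i with
  | zero => omega
  | succ i ih =>
      intro h1 h2
      rcases Nat.lt_or_ge (j + 1) (i + 1) with hlt | hge
      · have hc : Commute (σb (n := n) j) (σb (i + 1)) :=
          sigma_comm hj (by omega) h2
        have hmid : (σb (n := n) (i+1))⁻¹ * σb j * σb (i + 1) = σb j := by
          rw [mul_assoc, hc.eq, ← mul_assoc, inv_mul_cancel, one_mul]
        show (σb (i+1) * abr i)⁻¹ * σb j * (σb (i+1) * abr i) = _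
        calc (σb (i+1) * abr i)⁻¹ * σb j * (σb (i+1) * abr i)
            = (abr i)⁻¹ * ((σb (i+1))⁻¹ * σb j * σb (i+1)) * abr i := by group
          _ = (abr i)⁻¹ * σb j * abr i := by rw [hmid]
          _ = σb (j + 1) := ih (by omega) (by omega)
      · obtain ⟨p, rfl⟩ : ∃ p, j = p + 1 := ⟨j - 1, by omega⟩
        have hip : i = p + 1 := by omega
        subst hip
        show (σb (p+2) * (σb (p+1) * abr p))⁻¹ * σb (p+1) * (σb (p+2) * (σb (p+1) * abr p)) = _
        have hb := sigma_braid (n := n) (i := p + 1) (Nat.le_add_left 1 p) (by omega : p + 1 + 1 ≤ n)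
        have hc : Commute (σb (n := n) (p + 2)) (abr p) := sigma_comm_abr (by omega) (by omega)
        have key : (σb (n := n) (p+1))⁻¹ * ((σb (p+2))⁻¹ * (σb (p+1) * (σb (p+2) * σb (p+1)))) =
            σb (n := n) (p+2) := by
          have h3 : σb (n := n) (p+1) * (σb (p+2) * σb (p+1)) = σb (p+2) * σb (p+1) * σb (p+2) := by
            rw [← mul_assoc]
            have : p + 1 + 1 = p + 2 := rfl
            rw [← this]; exact hb
          rw [h3]; group
        calc (σb (p+2) * (σb (p+1) * abr p))⁻¹ * σb (p+1) * (σb (p+2) * (σb (p+1) * abr p))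
            = (abr p)⁻¹ * ((σb (p+1))⁻¹ * ((σb (p+2))⁻¹ * (σb (p+1) * (σb (p+2) * σb (p+1))))) *
              abr p := by group
          _ = (abr p)⁻¹ * (σb (p+2) * abr p) := by rw [key]; group
          _ = (abr p)⁻¹ * (abr p * σb (p+2)) := by rw [hc.eq]
          _ = σb (p+1+1) := by group

end Aux

section Aux2

lemma pi_sigma {n j : ℕ} (h1 : 1 ≤ j) (h2 : j ≤ n) :
    πb (σb (n := n) j) =
      Equiv.swap (⟨j - 1, by omega⟩ : Fin (n + 1)) (⟨j, by omega⟩ : Fin (n + 1)) := by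
  rw [sigma_eq h1 h2]
  show PresentedGroup.toGroup (braid_rels_perm n) (PresentedGroup.of _) = _
  rw [PresentedGroup.toGroup.of]
  unfold swapGen
  congr 1 <;> apply Fin.val_injective <;> simp [Fin.val_succ] <;> omega

lemma pi_abr {n : ℕ} : ∀ i (h : i ≤ n),
    πb (abr (n := n) i) (⟨0, by omega⟩ : Fin (n + 1)) = ⟨i, by omega⟩ := by
  intro i
  induction i with
  | zero =>
      intro _
      show πb (1 : BraidGroup n) _ = _
      rw [map_one]; rfl
  | succ i ih =>
      intro h2
      show πb (σb (i + 1) * abr i) _ = _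
      rw [map_mul, Equiv.Perm.mul_apply, ih (by omega), pi_sigma (by omega) h2]
      have : (⟨i, by omega⟩ : Fin (n + 1)) = ⟨i + 1 - 1, by omega⟩ := by
        apply Fin.val_injective; simp
      rw [this, Equiv.swap_apply_left]

lemma fix0 {n M K : ℕ} (hM : 2 ≤ M) {w : BraidGroup n} (hw : w ∈ AIb n M K) :
    πb w (⟨0, by omega⟩ : Fin (n + 1)) = ⟨0, by omega⟩ := by
  refine Subgroup.closure_induction
    (p := fun x _ => πb x (⟨0, by omega⟩ : Fin (n + 1)) = ⟨0, by omega⟩) ?_ ?_ ?_ ?_ hw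
  · rintro y ⟨j, hj1, hj2, rfl⟩
    by_cases hjn : j ≤ n
    · rw [pi_sigma (by omega) hjn]
      apply Equiv.swap_apply_of_ne_of_ne <;>
        exact fun hc => by have := congrArg Fin.val hc; simp at this; omega
    · have : σb (n := n) j = 1 := dif_neg (by omega)
      rw [this, map_one]; rfl
  · show πb (1 : BraidGroup n) _ = _
    rw [map_one]; rfl
  · intro x y _ _ px py
    show πb (x * y) _ = _
    rw [map_mul, Equiv.Perm.mul_apply, py, px]
  · intro x _ px
    show πb x⁻¹ _ = _
    rw [map_inv]
    conv_lhs => rw [← px]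
    exact Equiv.symm_apply_apply _ _

end Aux2

set_option maxHeartbeats 1000000 in
theorem lemma_technical_2 (n m k i0 j0 : ℕ) (hm : 1 ≤ m) (hk : 1 ≤ k) (hmk : m + k ≤ n)
    (hi0 : i0 ≤ n) (hj0 : j0 ≤ n) (g : BraidGroup n) (hg : g ∈ AIb n m k)
    (z : BraidGroup n) (hz : z = (abr i0)⁻¹ * g * abr j0)
    (hpure : πb z (⟨0, by omega⟩ : Fin (n + 1)) = ⟨0, by omega⟩)
    (hgt : m + k < i0 + 1) :
    i0 = j0 ∧ z ∈ AIb n (m + 1) k ∧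
      ∀ (hg' : g ∈ AIb n 1 (n - 1)) (sh : AIb n 1 (n - 1) →* BraidGroup n),
        (∀ j, 1 ≤ j → j ≤ n - 1 → ∀ hj : σb (n := n) j ∈ AIb n 1 (n - 1),
          sh ⟨σb j, hj⟩ = σb (j + 1)) →
        z = sh ⟨g, hg'⟩ := by
  have hik : m + k ≤ i0 := by omega
  have conj_gen : ∀ jj, m ≤ jj → jj ≤ m + k - 1 →
      (abr (n := n) i0)⁻¹ * σb jj * abr i0 = σb (jj + 1) := fun jj hj1 hj2 =>
    conj_abr (by omega) i0 (by omega) hi0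
  -- conjugation sends AIb n m k into AIb n (m+1) k
  have key_mem : ∀ x, x ∈ AIb n m k → (abr (n := n) i0)⁻¹ * x * abr i0 ∈ AIb n (m + 1) k := by
    intro x hx
    refine Subgroup.closure_induction
      (p := fun x _ => (abr (n := n) i0)⁻¹ * x * abr i0 ∈ AIb n (m + 1) k) ?_ ?_ ?_ ?_ hx
    · rintro y ⟨j, hj1, hj2, rfl⟩
      rw [conj_gen j hj1 hj2]
      exact Subgroup.subset_closure ⟨j + 1, by omega, by omega, rfl⟩
    · show (abr (n := n) i0)⁻¹ * 1 * abr i0 ∈ AIb n (m + 1) k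
      have h1 : (abr (n := n) i0)⁻¹ * 1 * abr i0 = 1 := by group
      rw [h1]; exact one_mem _
    · intro x y _ _ px py
      show (abr (n := n) i0)⁻¹ * (x * y) * abr i0 ∈ AIb n (m + 1) k
      have h1 : (abr (n := n) i0)⁻¹ * (x * y) * abr i0 =
          ((abr i0)⁻¹ * x * abr i0) * ((abr i0)⁻¹ * y * abr i0) := by group
      rw [h1]; exact mul_mem px py
    · intro x _ px
      show (abr (n := n) i0)⁻¹ * x⁻¹ * abr i0 ∈ AIb n (m + 1) k
      have h1 : (abr (n := n) i0)⁻¹ * x⁻¹ * abr i0 = ((abr i0)⁻¹ * x * abr i0)⁻¹ := by group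
      rw [h1]; exact inv_mem px
  have hw : (abr (n := n) i0)⁻¹ * g * abr i0 ∈ AIb n (m + 1) k := key_mem g hg
  have hwfix : πb ((abr (n := n) i0)⁻¹ * g * abr i0) (⟨0, by omega⟩ : Fin (n + 1)) =
      ⟨0, by omega⟩ := fix0 (by omega) hw
  have hz2 : z = ((abr i0)⁻¹ * g * abr i0) * ((abr i0)⁻¹ * abr j0) := by rw [hz]; group
  -- i0 = j0
  have hij : i0 = j0 := by
    have hp := hpure
    rw [hz2, map_mul, Equiv.Perm.mul_apply] at hp
    have h3 : πb ((abr (n := n) i0)⁻¹ * abr j0) (⟨0, by omega⟩ : Fin (n + 1)) =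
        ⟨0, by omega⟩ := Equiv.injective (πb _) (hp.trans hwfix.symm)
    rw [map_mul, map_inv, Equiv.Perm.mul_apply, pi_abr j0 hj0] at h3
    have h4 : (⟨j0, by omega⟩ : Fin (n + 1)) = πb (abr (n := n) i0) ⟨0, by omega⟩ := by
      conv_lhs => rw [← Equiv.apply_symm_apply (πb (abr (n := n) i0)) ⟨j0, by omega⟩, ← Equiv.Perm.inv_def, h3]
    rw [pi_abr i0 hi0] at h4
    have := congrArg Fin.val h4
    simpa using this.symm
  have hzw : z = (abr (n := n) i0)⁻¹ * g * abr i0 := by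
    rw [hz2, hij]; group
  refine ⟨hij, hzw ▸ hw, ?_⟩
  intro hg' sh hsh
  have sub : AIb n m k ≤ AIb n 1 (n - 1) := by
    refine (Subgroup.closure_le _).mpr ?_
    rintro x ⟨j, hj1, hj2, rfl⟩
    exact Subgroup.subset_closure ⟨j, by omega, by omega, rfl⟩
  have main : ∀ x (hx : x ∈ AIb n m k),
      (abr (n := n) i0)⁻¹ * x * abr i0 = sh ⟨x, sub hx⟩ := by
    intro x hx
    refine Subgroup.closure_induction
      (p := fun x hx => (abr (n := n) i0)⁻¹ * x * abr i0 = sh ⟨x, sub hx⟩) ?_ ?_ ?_ ?_ hx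
    · rintro y ⟨j, hj1, hj2, rfl⟩
      rw [conj_gen j hj1 hj2, hsh j (by omega) (by omega)]
    · show (abr (n := n) i0)⁻¹ * 1 * abr i0 = sh ⟨1, sub (one_mem _)⟩
      have h1 : (abr (n := n) i0)⁻¹ * 1 * abr i0 = 1 := by group
      rw [h1]
      have h2 : (⟨1, sub (one_mem _)⟩ : AIb n 1 (n - 1)) = 1 := rfl
      rw [h2, map_one]
    · intro x y hxm hym px py
      show (abr (n := n) i0)⁻¹ * (x * y) * abr i0 = sh ⟨x * y, sub (mul_mem hxm hym)⟩
      have h1 : (abr (n := n) i0)⁻¹ * (x * y) * abr i0 =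
          ((abr i0)⁻¹ * x * abr i0) * ((abr i0)⁻¹ * y * abr i0) := by group
      have h2 : (⟨x * y, sub (mul_mem hxm hym)⟩ : AIb n 1 (n - 1)) =
          ⟨x, sub hxm⟩ * ⟨y, sub hym⟩ := rfl
      rw [h1, px, py, h2, map_mul]
    · intro x hxm px
      show (abr (n := n) i0)⁻¹ * x⁻¹ * abr i0 = sh ⟨x⁻¹, sub (inv_mem hxm)⟩
      have h1 : (abr (n := n) i0)⁻¹ * x⁻¹ * abr i0 = ((abr i0)⁻¹ * x * abr i0)⁻¹ := by group
      have h2 : (⟨x⁻¹, sub (inv_mem hxm)⟩ : AIb n 1 (n - 1)) = (⟨x, sub hxm⟩ : AIb n 1 (n - 1))⁻¹ :=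
        rfl
      rw [h1, px, h2, map_inv]
  have h5 := main g hg
  rw [hzw, h5]
end

section
/- Let I = {m, …, m+k−1} ⊆ {1,…,n}, let g ∈ A_I, and let 0 ≤ i_0, j_0 ≤ n with m ≤ i_0+1 ≤ m+k and m ≤ j_0+1 ≤ m+k. Then a_{i_0}^{-1} g a_{j_0} lies in the conjugate subgroup a_{m−1}^{-1} A_I a_{m−1}; explicitly, a_{i_0}^{-1} g a_{j_0} = a_{m−1}^{-1} g' a_{m−1} where g' = (σ_m^{-1} ⋯ σ_{i_0}^{-1}) g (σ_{j_0} ⋯ σ_m) ∈ A_I. -/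
/-!
Peeling off the top factors of `a_i = σ_i ⋯ σ_m · a_{m-1}` turns `a_{i₀}⁻¹ g a_{j₀}` into
`a_{m-1}⁻¹ g' a_{m-1}`, and the peeled factors only involve generators of `A_I`.
-/

/-- The descending product `σ_{m+t-1} ⋯ σ_m`. -/
noncomputable def σDescProd {n : ℕ} (m t : ℕ) : BraidGroup n :=
  ((List.range' m t).reverse.map (fun j => σb (n := n) j)).prod

theorem σDescProd_inv {n : ℕ} (m t : ℕ) :
    (σDescProd (n := n) m t)⁻¹ = ((List.range' m t).map (fun j => (σb (n := n) j)⁻¹)).prod := by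
  simp [σDescProd, List.prod_inv_reverse, List.map_reverse, Function.comp_def]

theorem σDescProd_mem_AIb {n m k t : ℕ} (ht : t ≤ k) : σDescProd (n := n) m t ∈ AIb n m k := by
  refine Subgroup.list_prod_mem _ fun x hx => ?_
  obtain ⟨j, hj, rfl⟩ := List.mem_map.mp hx
  rw [List.mem_reverse, List.mem_range'_1] at hj
  exact Subgroup.subset_closure ⟨j, hj.1, by omega, rfl⟩

theorem abr_add {n : ℕ} (m t : ℕ) : abr (n := n) (m + t) = σDescProd (m + 1) t * abr m := by
  induction t with
  | zero => simp [σDescProd]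
  | succ t ih =>
    rw [← add_assoc, abr, ih, σDescProd, σDescProd, List.range'_1_concat]
    simp [mul_assoc, add_right_comm]

theorem abr_eq_σDescProd_mul {n m i : ℕ} (hm : 1 ≤ m) (hi : m ≤ i + 1) :
    abr (n := n) i = σDescProd m (i + 1 - m) * abr (m - 1) := by
  have := abr_add (n := n) (m - 1) (i + 1 - m)
  rwa [show m - 1 + (i + 1 - m) = i by omega, show m - 1 + 1 = m by omega] at this

theorem lemma_technical_3_general (n m k i0 j0 : ℕ) (hm : 1 ≤ m)
    (hi1 : m ≤ i0 + 1) (hi2 : i0 + 1 ≤ m + k) (hj1 : m ≤ j0 + 1) (hj2 : j0 + 1 ≤ m + k)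
    (g : BraidGroup n) (hg : g ∈ AIb n m k) :
    -- g' = (σ_m⁻¹ ⋯ σ_{i0}⁻¹) g (σ_{j0} ⋯ σ_m)
    (((List.range' m (i0 + 1 - m)).map (fun j => (σb (n := n) j)⁻¹)).prod * g *
        ((List.range' m (j0 + 1 - m)).reverse.map (fun j => σb (n := n) j)).prod) ∈ AIb n m k ∧
    (abr (n := n) i0)⁻¹ * g * abr j0 =
      (abr (m - 1))⁻¹ *
        (((List.range' m (i0 + 1 - m)).map (fun j => (σb (n := n) j)⁻¹)).prod * g *
          ((List.range' m (j0 + 1 - m)).reverse.map (fun j => σb (n := n) j)).prod) *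
        abr (m - 1) := by
  rw [← σDescProd.eq_1, ← σDescProd_inv]
  refine ⟨mul_mem (mul_mem (inv_mem (σDescProd_mem_AIb (by omega))) hg)
    (σDescProd_mem_AIb (by omega)), ?_⟩
  rw [abr_eq_σDescProd_mul hm hi1, abr_eq_σDescProd_mul hm hj1]
  group

theorem lemma_technical_3 (n m k i0 j0 : ℕ) (hm : 1 ≤ m) (hk : 1 ≤ k) (hmk : m + k - 1 ≤ n)
    (hi0 : i0 ≤ n) (hj0 : j0 ≤ n)
    (hi1 : m ≤ i0 + 1) (hi2 : i0 + 1 ≤ m + k) (hj1 : m ≤ j0 + 1) (hj2 : j0 + 1 ≤ m + k)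
    (g : BraidGroup n) (hg : g ∈ AIb n m k) :
    -- g' = (σ_m⁻¹ ⋯ σ_{i0}⁻¹) g (σ_{j0} ⋯ σ_m)
    (((List.range' m (i0 + 1 - m)).map (fun j => (σb (n := n) j)⁻¹)).prod * g *
        ((List.range' m (j0 + 1 - m)).reverse.map (fun j => σb (n := n) j)).prod) ∈ AIb n m k ∧
    (abr (n := n) i0)⁻¹ * g * abr j0 =
      (abr (m - 1))⁻¹ *
        (((List.range' m (i0 + 1 - m)).map (fun j => (σb (n := n) j)⁻¹)).prod * g *
          ((List.range' m (j0 + 1 - m)).reverse.map (fun j => σb (n := n) j)).prod) *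
        abr (m - 1) :=
  lemma_technical_3_general n m k i0 j0 hm hi1 hi2 hj1 hj2 g hg
end
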